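/- For all real x with 0 < x ≤ 1 and all natural numbers k₁, k₂, the Taylor polynomial of arctan at 0 of degree 3 + 4k₁ is strictly less than arctan x, and arctan x is strictly less than the Taylor polynomial of arctan at 0 of degree 1 + 4k₂. -/
import Mathlib

open Real intervalIntegral

/-- The Taylor polynomial of `arctan` at `0` of degree `n`:
the partial sum `∑_{k : 2k+1 ≤ n} (−1)^k x^(2k+1)/(2k+1)`. -/
noncomputable def arctanTaylor (n : ℕ) (x : ℝ) : ℝ :=
  ∑ k ∈ Finset.range (n + 1), if 2*k + 1 ≤ n then (-1 : ℝ)^k * x^(2*k+1) / (2*k+1) else 0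

lemma remainder_pos (n : ℕ) (x : ℝ) (hx : 0 < x) :
    0 < ∫ t in (0:ℝ)..x, t^(2*n) / (1 + t^2) := by
  apply intervalIntegral.intervalIntegral_pos_of_pos_on
  · apply Continuous.intervalIntegrable
    exact Continuous.div (by continuity) (by continuity) (fun t => by positivity)
  · intro t ht
    have h1 : 0 < t := ht.1
    positivity
  · exact hx

lemma key (n : ℕ) (x : ℝ) :
    arctan x = (∑ k ∈ Finset.range n, (-1:ℝ)^k * x^(2*k+1)/(2*k+1))
      + (-1:ℝ)^n * ∫ t in (0:ℝ)..x, t^(2*n) / (1 + t^2) := by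
  have hpt : ∀ t : ℝ, (1:ℝ)/(1+t^2)
      = (∑ k ∈ Finset.range n, (-1:ℝ)^k * t^(2*k)) + (-1:ℝ)^n * (t^(2*n) / (1 + t^2)) := by
    intro t
    have h2 : (1:ℝ) + t^2 ≠ 0 := by positivity
    have hrw : ∀ k, (-1:ℝ)^k * t^(2*k) = (-(t^2))^k := by
      intro k; rw [pow_mul, neg_pow]; ring
    have hgs : (∑ k ∈ Finset.range n, (-1:ℝ)^k * t^(2*k)) * (1+t^2) = 1 - (-1:ℝ)^n * t^(2*n) := by
      rw [Finset.sum_congr rfl fun k _ => hrw k]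
      have h3 : ((-(t^2))^n : ℝ) = (-1:ℝ)^n * t^(2*n) := by rw [← hrw]
      calc (∑ k ∈ Finset.range n, (-(t^2))^k) * (1+t^2)
          = -((∑ k ∈ Finset.range n, (-(t^2))^k) * (-(t^2) - 1)) := by ring
        _ = -((-(t^2))^n - 1) := by rw [geom_sum_mul]
        _ = 1 - (-1:ℝ)^n * t^(2*n) := by rw [h3]; ring
    field_simp
    linarith [hgs]
  have hint : ∫ t in (0:ℝ)..x, (1:ℝ)/(1+t^2)
      = ∫ t in (0:ℝ)..x, ((∑ k ∈ Finset.range n, (-1:ℝ)^k * t^(2*k)) + (-1:ℝ)^n * (t^(2*n) / (1 + t^2))) := by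
    congr 1; ext t; exact hpt t
  rw [integral_one_div_one_add_sq, arctan_zero, sub_zero] at hint
  rw [hint, intervalIntegral.integral_add, intervalIntegral.integral_finset_sum,
    intervalIntegral.integral_const_mul]
  · congr 1
    apply Finset.sum_congr rfl
    intro k _
    rw [intervalIntegral.integral_const_mul, integral_pow]
    simp
    ring
  · intro k _
    apply Continuous.intervalIntegrable; continuity
  · apply Continuous.intervalIntegrable; continuity
  · apply Continuous.intervalIntegrable
    exact Continuous.mul continuous_const
      (Continuous.div (by continuity) (by continuity) (fun t => by positivity))

lemma taylor_eq (m : ℕ) (x : ℝ) :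
    arctanTaylor (2*m+1) x = ∑ k ∈ Finset.range (m+1), (-1:ℝ)^k * x^(2*k+1)/(2*k+1) := by
  unfold arctanTaylor
  rw [← Finset.sum_subset (Finset.range_subset_range.2 (show m+1 ≤ 2*m+1+1 by omega))]
  · apply Finset.sum_congr rfl
    intro k hk
    rw [if_pos]
    simp only [Finset.mem_range] at hk; omega
  · intro k _ hk
    rw [if_neg]
    simp only [Finset.mem_range] at hk; omega

theorem stmt9 (x : ℝ) (h1 : 0 < x) (h2 : x ≤ 1) (k₁ k₂ : ℕ) :
    arctanTaylor (3 + 4*k₁) x < arctan x ∧ arctan x < arctanTaylor (1 + 4*k₂) x := by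
  constructor
  · have h3 : 3 + 4*k₁ = 2*(2*k₁+1)+1 := by omega
    rw [h3, taylor_eq]
    have := key (2*k₁+2) x
    have hR := remainder_pos (2*k₁+2) x h1
    rw [this]
    have : ((-1:ℝ))^(2*k₁+2) = 1 := by
      rw [pow_add]; simp [pow_mul]
    rw [this]
    nlinarith [hR]
  · have h3 : 1 + 4*k₂ = 2*(2*k₂)+1 := by omega
    rw [h3, taylor_eq]
    have := key (2*k₂+1) x
    have hR := remainder_pos (2*k₂+1) x h1
    rw [this]
    have : ((-1:ℝ))^(2*k₂+1) = -1 := by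
      rw [pow_add]; simp [pow_mul]
    rw [this]
    nlinarith [hR]
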